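/- arXiv:1803.09591 — 3 statements merged into one kernel-verified Lean document; each statement's English description precedes it below -/
import Mathlib

section
/- Let R₀ < 0, n ≥ 1, and let R : [0,T) → ℝ be differentiable with R(0) ≥ R₀ and R'(t) ≥ (2/n) R(t)² whenever R(t) < 0. Then R(t) ≥ (1/R₀ − 2t/n)⁻¹ for all t ∈ [0,T). -/
/-! `φ t = (1 / R₀ - k t)⁻¹` solves `φ' = k φ²`, `φ 0 = R₀`, and stays negative for `t ≥ 0`.
Since `y ↦ k y²` is decreasing on the negative axis, at a first contact of `R` with the barrier
`φ - ε (1 + t)` we would have `R' ≥ k R² ≥ k φ² > (φ - ε (1 + t))'`; so `R` stays above every such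
barrier, and `ε → 0` gives `φ ≤ R`. -/

open Set

theorem le_of_hasDerivAt_of_antitoneOn_Iio {g φ R R' : ℝ → ℝ} {a b : ℝ}
    (hg : AntitoneOn g (Iio 0))
    (hφ : ∀ x ∈ Icc a b, HasDerivAt φ (g (φ x)) x) (hφ_neg : ∀ x ∈ Icc a b, φ x < 0)
    (hR : ∀ x ∈ Icc a b, HasDerivAt R (R' x) x)
    (hR' : ∀ x ∈ Ico a b, R x < 0 → g (R x) ≤ R' x) (ha : φ a ≤ R a) :
    ∀ x ∈ Icc a b, φ x ≤ R x := by
  intro x hx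
  have barrier : ∀ ε > (0 : ℝ), φ x - ε * (1 + (x - a)) ≤ R x := by
    intro ε hε
    have hbarrier : ∀ y ∈ Icc a b,
        HasDerivAt (fun y => φ y - ε * (1 + (y - a))) (g (φ y) - ε) y := fun y hy =>
      ((hφ y hy).sub ((((hasDerivAt_id' y).sub_const a).const_add 1).const_mul ε)).congr_deriv
        (by ring)
    refine image_le_of_deriv_right_lt_deriv_boundary'
      (fun y hy => (hbarrier y hy).continuousAt.continuousWithinAt)
      (fun y hy => (hbarrier y (Ico_subset_Icc_self hy)).hasDerivWithinAt) (by linarith)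
      (fun y hy => (hR y hy).continuousAt.continuousWithinAt)
      (fun y hy => (hR y (Ico_subset_Icc_self hy)).hasDerivWithinAt) ?_ hx
    intro y hy hcontact
    have hRφ : R y < φ y := by nlinarith [hy.1]
    have hφy := hφ_neg y (Ico_subset_Icc_self hy)
    have hRy : R y < 0 := hRφ.trans hφy
    calc g (φ y) - ε < g (φ y) := by linarith
      _ ≤ g (R y) := hg hRy hφy hRφ.le
      _ ≤ R' y := hR' y hy hRy
  refine le_of_forall_pos_le_add fun δ hδ => ?_
  have hlen : 0 < 1 + (x - a) := by linarith [hx.1]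
  have := barrier (δ / (1 + (x - a))) (by positivity)
  rwa [div_mul_cancel₀ _ hlen.ne', sub_le_iff_le_add] at this

theorem antitoneOn_const_mul_sq_Iio {k : ℝ} (hk : 0 ≤ k) :
    AntitoneOn (fun y : ℝ => k * y ^ 2) (Iio 0) := fun y _ z hz hyz =>
  mul_le_mul_of_nonneg_left (by nlinarith [mem_Iio.mp hz]) hk

theorem hasDerivAt_inv_sub_const_mul {c k x : ℝ} (hx : c - k * x ≠ 0) :
    HasDerivAt (fun y => (c - k * y)⁻¹) (k * (c - k * x)⁻¹ ^ 2) x := by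
  have hlin : HasDerivAt (fun y => c - k * y) (-k) x := by
    simpa using ((hasDerivAt_id x).const_mul k).const_sub c
  exact (hlin.inv hx).congr_deriv (by rw [inv_pow]; ring)

theorem one_div_sub_const_mul_neg {R₀ k t : ℝ} (hR₀ : R₀ < 0) (hk : 0 ≤ k) (ht : 0 ≤ t) :
    1 / R₀ - k * t < 0 := by
  linarith [one_div_neg.mpr hR₀, mul_nonneg hk ht]

theorem le_of_hasDerivAt_ge_const_mul_sq {R R' : ℝ → ℝ} {R₀ k T : ℝ} (hR₀ : R₀ < 0) (hk : 0 ≤ k)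
    (hR0 : R₀ ≤ R 0) (hR : ∀ t ∈ Ico 0 T, HasDerivAt R (R' t) t)
    (hR' : ∀ t ∈ Ico 0 T, R t < 0 → k * R t ^ 2 ≤ R' t) :
    ∀ t ∈ Ico 0 T, (1 / R₀ - k * t)⁻¹ ≤ R t := by
  intro t ht
  have hsub : Icc 0 t ⊆ Ico 0 T := Icc_subset_Ico_right ht.2
  refine le_of_hasDerivAt_of_antitoneOn_Iio (antitoneOn_const_mul_sq_Iio hk)
    (fun x hx => hasDerivAt_inv_sub_const_mul (one_div_sub_const_mul_neg hR₀ hk hx.1).ne)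
    (fun x hx => inv_lt_zero.mpr (one_div_sub_const_mul_neg hR₀ hk hx.1))
    (fun x hx => hR x (hsub hx))
    (fun x hx => hR' x (hsub (Ico_subset_Icc_self hx))) (by simpa using hR0) t ⟨ht.1, le_rfl⟩

theorem scalar_curvature_lower_bound_ode_general (R₀ : ℝ) (hR₀ : R₀ < 0) (n : ℕ)
    (T : ℝ) (R R' : ℝ → ℝ) (hR0 : R 0 ≥ R₀)
    (hderiv : ∀ t ∈ Set.Ico 0 T, HasDerivAt R (R' t) t)
    (hineq : ∀ t ∈ Set.Ico 0 T, R t < 0 → R' t ≥ (2 / (n : ℝ)) * (R t) ^ 2) :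
    ∀ t ∈ Set.Ico 0 T, R t ≥ (1 / R₀ - 2 * t / (n : ℝ))⁻¹ := by
  intro t ht
  rw [mul_div_right_comm]
  exact le_of_hasDerivAt_ge_const_mul_sq hR₀ (by positivity) hR0 hderiv hineq t ht

theorem scalar_curvature_lower_bound_ode (R₀ : ℝ) (hR₀ : R₀ < 0) (n : ℕ) (hn : 1 ≤ n)
    (T : ℝ) (R R' : ℝ → ℝ) (hR0 : R 0 ≥ R₀)
    (hderiv : ∀ t ∈ Set.Ico 0 T, HasDerivAt R (R' t) t)
    (hineq : ∀ t ∈ Set.Ico 0 T, R t < 0 → R' t ≥ (2 / (n : ℝ)) * (R t) ^ 2) :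
    ∀ t ∈ Set.Ico 0 T, R t ≥ (1 / R₀ - 2 * t / (n : ℝ))⁻¹ :=
  scalar_curvature_lower_bound_ode_general R₀ hR₀ n T R R' hR0 hderiv hineq
end

section
/- Let τ, f : [s,t] → ℝ with τ(σ) = t − σ, and suppose f is differentiable on [s,t) with −∂_σ f(σ) ≤ (1/2) R(σ) − (1/(2τ(σ))) f(σ) for an integrable function R, and √(t−σ)·f(σ) → 0 as σ → t. Then √(t−s) f(s) ≤ (1/2) ∫ₛᵗ √(t−σ) R(σ) dσ. -/
/-!
With `τ = t - σ`, the hypothesis says exactly that `g σ = -√τ f σ` satisfies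
`g' = √τ (-f' + f / (2τ)) ≤ √τ R / 2` on `[s, t)`. Since `g → 0` as `σ → t⁻`, integrating this
derivative bound from `s` to `t` gives `√(t - s) f s = 0 - g s ≤ ½ ∫ₛᵗ √τ R`.
-/

open Set Filter Topology MeasureTheory intervalIntegral

theorem sub_le_integral_of_hasDerivAt_of_le_of_tendsto_nhdsLT {g g' φ : ℝ → ℝ} {a b L : ℝ}
    (hab : a < b) (hderiv : ∀ x ∈ Ico a b, HasDerivAt g (g' x) x)
    (hφg : ∀ x ∈ Ico a b, g' x ≤ φ x) (hφ : IntervalIntegrable φ volume a b)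
    (hL : Tendsto g (𝓝[<] b) (𝓝 L)) :
    L - g a ≤ ∫ x in a..b, φ x := by
  classical
  -- Redefining `g` at `b` as its limit `L` makes it continuous on `[a, b]`.
  set G : ℝ → ℝ := Function.update g b L
  have hcont : ContinuousOn G (Icc a b) := by
    rw [continuousOn_update_iff, Icc_sdiff_right]
    exact ⟨fun x hx => (hderiv x hx).continuousAt.continuousWithinAt,
      fun _ => hL.mono_left (nhdsWithin_mono _ Ico_subset_Iio_self)⟩
  have hGderiv : ∀ x ∈ Ico a b, HasDerivWithinAt G (g' x) (Ioi x) x := fun x hx => by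
    refine ((hderiv x hx).congr_of_eventuallyEq ?_).hasDerivWithinAt
    filter_upwards [Iio_mem_nhds hx.2] with y hy using Function.update_of_ne hy.ne _ _
  have hφIcc : IntegrableOn φ (Icc a b) := by
    rw [integrableOn_Icc_iff_integrableOn_Ioc]
    exact (intervalIntegrable_iff_integrableOn_Ioc_of_le hab.le).mp hφ
  simpa [G, hab.ne] using sub_le_integral_of_hasDeriv_right_of_le_Ico hab.le hcont hGderiv hφIcc hφg

theorem hasDerivAt_neg_sqrt_sub_mul {f : ℝ → ℝ} {f' t σ : ℝ} (hσ : σ < t)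
    (hf : HasDerivAt f f' σ) :
    HasDerivAt (fun u => -(√(t - u) * f u)) (√(t - σ) * (-f' + f σ / (2 * (t - σ)))) σ := by
  have hpos : 0 < t - σ := sub_pos.mpr hσ
  have hsqrt := ((hasDerivAt_id' σ).const_sub t).sqrt hpos.ne'
  refine (hsqrt.mul hf).neg.congr_deriv ?_
  have hs : √(t - σ) ≠ 0 := (Real.sqrt_pos.mpr hpos).ne'
  field_simp
  rw [Real.sq_sqrt hpos.le]
  ring

theorem sqrt_weighted_ode_lemma (s t : ℝ) (hst : s < t) (f f' R : ℝ → ℝ)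
    (hderiv : ∀ σ ∈ Set.Ico s t, HasDerivAt f (f' σ) σ)
    (hineq : ∀ σ ∈ Set.Ico s t,
      -f' σ ≤ (1 / 2) * R σ - (1 / (2 * (t - σ))) * f σ)
    (hRint : IntervalIntegrable R MeasureTheory.volume s t)
    (hlim : Filter.Tendsto (fun σ => Real.sqrt (t - σ) * f σ)
      (nhdsWithin t (Set.Iio t)) (nhds 0)) :
    Real.sqrt (t - s) * f s ≤ (1 / 2) * ∫ σ in s..t, Real.sqrt (t - σ) * R σ := by
  have hweighted : IntervalIntegrable (fun σ => 1 / 2 * (√(t - σ) * R σ)) volume s t :=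
    (hRint.continuousOn_mul (by fun_prop)).const_mul _
  have hbound : ∀ σ ∈ Ico s t,
      √(t - σ) * (-f' σ + f σ / (2 * (t - σ))) ≤ 1 / 2 * (√(t - σ) * R σ) := fun σ hσ => by
    rw [mul_left_comm]
    gcongr
    linarith [hineq σ hσ, one_div_mul_eq_div (2 * (t - σ)) (f σ)]
  have key := sub_le_integral_of_hasDerivAt_of_le_of_tendsto_nhdsLT hst
    (fun σ hσ => hasDerivAt_neg_sqrt_sub_mul hσ.2 (hderiv σ hσ)) hbound hweighted
    (by simpa using hlim.neg)
  rw [intervalIntegral.integral_const_mul] at key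
  linarith
end

section
/- Let μ₀ ∈ ℝ, n ≥ 1, T > 0, and V : [0,T) → (0,∞) differentiable. Suppose for all t ∈ [0,T): μ₀ ≤ −(T−t)(d/dt ln V(t)) + ln V(t) − (n/2) ln(4π(T−t)) − n, and (T−t) ln V(t) → 0 as t → T. Then V(t) ≥ (4π)^{n/2} e^{μ₀ + n/2} (T−t)^{n/2} for all t ∈ [0,T). -/
/-!
Write `c = n / 2` and `m = μ₀ + c`. The hypothesis says exactly that
`H(s) = (T - s) (log V(s) - c log (4π (T - s)) - m)` is nonincreasing on `[0, T)`, while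
`H(s) → 0` as `s → T⁻` because `(T - s) log V(s) → 0` and `x log x → 0`. Hence `H ≥ 0`, i.e.
`log V(t) ≥ m + c log (4π (T - t))`, which exponentiates to the claimed bound.
-/

open Real Filter Set Topology

theorem le_of_hasDerivAt_nonpos_of_tendsto_nhdsLT {f f' : ℝ → ℝ} {a b L : ℝ} (hab : a < b)
    (hf : ∀ x ∈ Ico a b, HasDerivAt f (f' x) x) (hf' : ∀ x ∈ Ioo a b, f' x ≤ 0)
    (hlim : Tendsto f (𝓝[<] b) (𝓝 L)) : L ≤ f a := by
  have hanti : AntitoneOn f (Ico a b) := by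
    refine antitoneOn_of_hasDerivWithinAt_nonpos (f' := f') (convex_Ico a b)
      (fun x hx => (hf x hx).continuousAt.continuousWithinAt) ?_ ?_ <;> rw [interior_Ico]
    · exact fun x hx => (hf x (Ioo_subset_Ico_self hx)).hasDerivWithinAt
    · exact hf'
  refine le_of_tendsto hlim ?_
  filter_upwards [Ioo_mem_nhdsLT hab] with x hx
  exact hanti (left_mem_Ico.2 hab) (Ioo_subset_Ico_self hx) hx.1.le

theorem continuous_mul_log_const_mul (a : ℝ) : Continuous fun x => x * log (a * x) := by
  rcases eq_or_ne a 0 with rfl | ha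
  · simpa using continuous_const
  have hsplit : (fun x => x * log (a * x)) = fun x => x * log a + x * log x := by
    funext x
    rcases eq_or_ne x 0 with rfl | hx
    · simp
    · rw [log_mul ha hx]; ring
  rw [hsplit]
  exact (continuous_id.mul continuous_const).add continuous_mul_log

section EntropyDefect

variable {V : ℝ → ℝ} {a c m T : ℝ}

theorem hasDerivAt_sub_mul_log_sub {v s : ℝ} (hV : HasDerivAt V v s) (hVs : V s ≠ 0)
    (ha : a ≠ 0) (hs : s ≠ T) :
    HasDerivAt (fun x => (T - x) * (log (V x) - c * log (a * (T - x)) - m))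
      (-(log (V s) - c * log (a * (T - s)) - m) + (T - s) * (v / V s) + c) s := by
  have hTs : T - s ≠ 0 := sub_ne_zero.2 hs.symm
  have hsub : HasDerivAt (fun x => T - x) (-1) s := by
    simpa using (hasDerivAt_id s).const_sub T
  have hlog : HasDerivAt (fun x => log (a * (T - x))) (a * -1 / (a * (T - s))) s :=
    (hsub.const_mul a).log (mul_ne_zero ha hTs)
  refine (hsub.mul (((hV.log hVs).sub (hlog.const_mul c)).sub_const m)).congr_deriv ?_
  simp only [Pi.sub_apply]
  field_simp
  ring

theorem tendsto_sub_mul_log_sub_nhdsLT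
    (hlim : Tendsto (fun x => (T - x) * log (V x)) (𝓝[<] T) (𝓝 0)) :
    Tendsto (fun x => (T - x) * (log (V x) - c * log (a * (T - x)) - m)) (𝓝[<] T) (𝓝 0) := by
  have hsub : Tendsto (fun x => T - x) (𝓝[<] T) (𝓝 0) := by
    have := ((continuous_sub_left T).tendsto T).mono_left (nhdsWithin_le_nhds (s := Iio T))
    rwa [sub_self] at this
  have hxlog : Tendsto (fun x => (T - x) * log (a * (T - x))) (𝓝[<] T) (𝓝 0) := by
    have := ((continuous_mul_log_const_mul a).tendsto 0).comp hsub
    rwa [zero_mul] at this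
  have := (hlim.sub (hxlog.const_mul c)).sub (hsub.mul_const m)
  rw [zero_mul, mul_zero, sub_zero, sub_zero] at this
  refine this.congr fun x => ?_
  ring

end EntropyDefect

theorem rpow_mul_exp_mul_rpow {a x : ℝ} (ha : 0 < a) (hx : 0 < x) (c m : ℝ) :
    a ^ c * exp m * x ^ c = exp (m + c * log (a * x)) := by
  rw [log_mul ha.ne' hx.ne', rpow_def_of_pos ha, rpow_def_of_pos hx, ← exp_add, ← exp_add]
  ring_nf

theorem volume_lower_from_mu_entropy_general (μ₀ : ℝ) (n : ℕ) (T : ℝ)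
    (V V' : ℝ → ℝ) (hVpos : ∀ t ∈ Set.Ico 0 T, 0 < V t)
    (hderiv : ∀ t ∈ Set.Ico 0 T, HasDerivAt V (V' t) t)
    (hineq : ∀ t ∈ Set.Ico 0 T,
      μ₀ ≤ -(T - t) * (V' t / V t) + Real.log (V t)
            - ((n : ℝ) / 2) * Real.log (4 * π * (T - t)) - (n : ℝ))
    (hlim : Filter.Tendsto (fun t => (T - t) * Real.log (V t))
      (nhdsWithin T (Set.Iio T)) (nhds 0)) :
    ∀ t ∈ Set.Ico 0 T,
      V t ≥ (4 * π) ^ ((n : ℝ) / 2) * Real.exp (μ₀ + (n : ℝ) / 2) * (T - t) ^ ((n : ℝ) / 2) := by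
  intro t ht
  have hsub : Ico t T ⊆ Ico 0 T := Ico_subset_Ico_left ht.1
  have hdefect : 0 ≤ (T - t) * (log (V t) - (n / 2) * log (4 * π * (T - t)) - (μ₀ + n / 2)) :=
    le_of_hasDerivAt_nonpos_of_tendsto_nhdsLT
      (f := fun x => (T - x) * (log (V x) - (n / 2) * log (4 * π * (T - x)) - (μ₀ + n / 2))) ht.2
      (fun s hs => hasDerivAt_sub_mul_log_sub (hderiv s (hsub hs)) (hVpos s (hsub hs)).ne'
        (by positivity) hs.2.ne)
      (fun s hs => by linarith [hineq s (hsub (Ioo_subset_Ico_self hs))])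
      (tendsto_sub_mul_log_sub_nhdsLT hlim)
  have hTt : 0 < T - t := sub_pos.2 ht.2
  have hlogV : μ₀ + n / 2 + (n / 2) * log (4 * π * (T - t)) ≤ log (V t) := by
    linarith [(mul_nonneg_iff_of_pos_left hTt).1 hdefect]
  rw [ge_iff_le, rpow_mul_exp_mul_rpow (by positivity) hTt, ← exp_log (hVpos t ht)]
  exact exp_le_exp.2 hlogV

theorem volume_lower_from_mu_entropy (μ₀ : ℝ) (n : ℕ) (hn : 1 ≤ n) (T : ℝ) (hT : 0 < T)
    (V V' : ℝ → ℝ) (hVpos : ∀ t ∈ Set.Ico 0 T, 0 < V t)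
    (hderiv : ∀ t ∈ Set.Ico 0 T, HasDerivAt V (V' t) t)
    (hineq : ∀ t ∈ Set.Ico 0 T,
      μ₀ ≤ -(T - t) * (V' t / V t) + Real.log (V t)
            - ((n : ℝ) / 2) * Real.log (4 * π * (T - t)) - (n : ℝ))
    (hlim : Filter.Tendsto (fun t => (T - t) * Real.log (V t))
      (nhdsWithin T (Set.Iio T)) (nhds 0)) :
    ∀ t ∈ Set.Ico 0 T,
      V t ≥ (4 * π) ^ ((n : ℝ) / 2) * Real.exp (μ₀ + (n : ℝ) / 2) * (T - t) ^ ((n : ℝ) / 2) :=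
  volume_lower_from_mu_entropy_general μ₀ n T V V' hVpos hderiv hineq hlim
end
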